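/- arXiv:2012.01992 — 8 statements merged into one kernel-verified Lean document; each statement's English description precedes it below -/
import Mathlib

section
/- Let n ≥ 1 and let v = (p,q) be a vertex of the n-Queens' graph Q(n), with 1 ≤ p,q ≤ n. Let k = min(p, q, n+1−p, n+1−q), so that v lies in the k-th peripheral vertex subset. Then the degree of v in Q(n) equals 3(n−1) + 2(k−1). -/
/-!
The neighbours of `v` are the squares other than `v` on the four lines through it (row, column
and the two diagonals), and two distinct lines meet only in `v`; so the degree is the total length
of the four lines minus four. Row and column have `n` squares each, and in coordinates `(x, y)`
centred at the middle of the board the two diagonals through `v` have `n - |x + y|` and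
`n - |x - y|` squares. Since `|x + y| + |x - y| = 2 max (|x|, |y|)` and `max (|x|, |y|)` is
`(n - 1) / 2 - (k - 1)`, the diagonals contribute `(n - 1) + 2 (k - 1)` neighbours.
-/

/-- The `n`-Queens' graph: vertices are the squares of the `n × n` chessboard
(coordinates `0 ≤ i, j ≤ n-1`, i.e. `Fin n × Fin n`); two distinct squares are
adjacent iff they share a row, a column, or a diagonal. -/
def queensGraph (n : ℕ) : SimpleGraph (Fin n × Fin n) where
  Adj u v := u ≠ v ∧ (u.1 = v.1 ∨ u.2 = v.2 ∨
    u.1.val + u.2.val = v.1.val + v.2.val ∨ u.1.val + v.2.val = v.1.val + u.2.val)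
  symm := by
    constructor
    rintro u v ⟨hne, h⟩
    refine ⟨hne.symm, ?_⟩
    rcases h with h | h | h | h
    exacts [Or.inl h.symm, Or.inr (Or.inl h.symm), Or.inr (Or.inr (Or.inl h.symm)),
      Or.inr (Or.inr (Or.inr h.symm))]
  loopless := ⟨fun u ⟨hne, _⟩ => hne rfl⟩

instance (n : ℕ) : DecidableRel (queensGraph n).Adj := fun u v =>
  inferInstanceAs (Decidable (u ≠ v ∧ (u.1 = v.1 ∨ u.2 = v.2 ∨
    u.1.val + u.2.val = v.1.val + v.2.val ∨ u.1.val + v.2.val = v.1.val + u.2.val)))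

open Finset

theorem Finset.card_erase_biUnion {ι α : Type*} [DecidableEq α] (s : Finset ι)
    (L : ι → Finset α) (v : α) (hv : ∀ i ∈ s, v ∈ L i)
    (hL : ∀ i ∈ s, ∀ j ∈ s, i ≠ j → L i ∩ L j ⊆ {v}) :
    #((s.biUnion L).erase v) = ∑ i ∈ s, (#(L i) - 1) := by
  rw [erase_biUnion, card_biUnion]
  · exact sum_congr rfl fun i hi => card_erase_of_mem (hv i hi)
  · refine fun i hi j hj hij => disjoint_left.mpr fun u hui huj => ?_
    rw [mem_erase] at hui huj
    exact hui.1 (mem_singleton.mp (hL i hi j hj hij (mem_inter_of_mem hui.2 huj.2)))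

namespace queensGraph

variable {n : ℕ}

def row (v : Fin n × Fin n) : Finset (Fin n × Fin n) := {u | u.1 = v.1}

def column (v : Fin n × Fin n) : Finset (Fin n × Fin n) := {u | u.2 = v.2}

def antidiagonal (n s : ℕ) : Finset (Fin n × Fin n) := {u | u.1.val + u.2.val = s}

def diagonal (v : Fin n × Fin n) : Finset (Fin n × Fin n) :=
  {u | u.1.val + v.2.val = v.1.val + u.2.val}

def lines (v : Fin n × Fin n) : Fin 4 → Finset (Fin n × Fin n) :=
  ![row v, column v, antidiagonal n (v.1.val + v.2.val), diagonal v]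

lemma neighborFinset_eq (v : Fin n × Fin n) :
    (queensGraph n).neighborFinset v = (univ.biUnion (lines v)).erase v := by
  ext u
  rw [SimpleGraph.mem_neighborFinset, SimpleGraph.adj_comm]
  simp [queensGraph, Fin.exists_fin_succ, lines, row, column, antidiagonal, diagonal]

lemma lines_inter_subset_singleton (v : Fin n × Fin n) {i j : Fin 4} (hij : i ≠ j) :
    lines v i ∩ lines v j ⊆ {v} := by
  intro u hu
  obtain ⟨⟨x, hx⟩, ⟨y, hy⟩⟩ := u
  obtain ⟨⟨a, ha⟩, ⟨b, hb⟩⟩ := v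
  fin_cases i <;> fin_cases j <;>
    simp_all [lines, row, column, antidiagonal, diagonal, Prod.ext_iff, Fin.ext_iff] <;> omega

lemma card_row (v : Fin n × Fin n) : #(row v) = n := by
  refine (card_nbij' Prod.snd (fun y => (v.1, y)) ?_ ?_ ?_ ?_).trans (card_fin n) <;>
    simp [Set.MapsTo, Set.LeftInvOn, row, Prod.ext_iff]

lemma card_column (v : Fin n × Fin n) : #(column v) = n := by
  refine (card_nbij' Prod.fst (fun x => (x, v.2)) ?_ ?_ ?_ ?_).trans (card_fin n) <;>
    simp [Set.MapsTo, Set.LeftInvOn, column, Prod.ext_iff]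

lemma card_antidiagonal (n s : ℕ) : #(antidiagonal n s) = min (s + 1) (2 * n - 1 - s) := by
  suffices #(antidiagonal n s) = #(Ico (s + 1 - n) (min (s + 1) n)) by
    rw [this, Nat.card_Ico]; omega
  refine card_bij' (fun u _ => u.1.val)
    (fun x hx => (⟨x, by grind⟩, ⟨s - x, by grind⟩)) ?_ ?_ ?_ ?_ <;>
    simp only [antidiagonal, mem_filter, mem_univ, true_and, mem_Ico, Prod.forall, Fin.forall_iff,
      Prod.ext_iff, Fin.ext_iff] <;>
    grind

lemma card_diagonal (v : Fin n × Fin n) :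
    #(diagonal v) = #(antidiagonal n (v.1.val + (n - 1 - v.2.val))) :=
  card_equiv ((Equiv.refl _).prodCongr Fin.revPerm) fun u => by
    simp only [diagonal, antidiagonal, mem_filter, mem_univ, true_and, Equiv.prodCongr_apply,
      Equiv.coe_refl, Prod.map_fst, Prod.map_snd, id_eq, Fin.revPerm_apply, Fin.val_rev]
    omega

lemma degree_eq (v : Fin n × Fin n) :
    (queensGraph n).degree v = ∑ i, (#(lines v i) - 1) := by
  rw [← SimpleGraph.card_neighborFinset_eq_degree, neighborFinset_eq]
  refine card_erase_biUnion _ _ _ (fun i _ => ?_) fun i _ j _ => lines_inter_subset_singleton v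
  fin_cases i <;> simp [lines, row, column, antidiagonal, diagonal]

end queensGraph

open queensGraph

theorem queens_degree_general (n : ℕ) (v : Fin n × Fin n)
    (k : ℕ) (hk : k = min (min (v.1.val + 1) (v.2.val + 1)) (min (n - v.1.val) (n - v.2.val))) :
    (queensGraph n).degree v = 3 * (n - 1) + 2 * (k - 1) := by
  rw [degree_eq, Fin.sum_univ_four]
  simp only [lines, Fin.isValue, Matrix.cons_val_zero, Matrix.cons_val_one, Matrix.cons_val,
    card_row, card_column, card_antidiagonal, card_diagonal]
  omega

/-- a vertex `v` of `Q(n)` in the `k`-th peripheral subset (where, in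
1-based coordinates `(p,q) = (v.1+1, v.2+1)`, `k = min (p, q, n+1-p, n+1-q)`)
has degree `3(n-1) + 2(k-1)`. -/
theorem queens_degree (n : ℕ) (hn : 1 ≤ n) (v : Fin n × Fin n)
    (k : ℕ) (hk : k = min (min (v.1.val + 1) (v.2.val + 1)) (min (n - v.1.val) (n - v.2.val))) :
    (queensGraph n).degree v = 3 * (n - 1) + 2 * (k - 1) :=
  queens_degree_general n v k hk
end

section
/- The stability (independence) number of the n-Queens' graph satisfies: α(Q(2)) = 1, α(Q(3)) = 2, and α(Q(n)) = n for every n ≥ 4. -/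
/-- The stability (independence) number of a graph: the maximum cardinality of a
set of pairwise non-adjacent vertices. -/
noncomputable def indepNum {V : Type*} (G : SimpleGraph V) : ℕ :=
  sSup {k | ∃ s : Finset V, s.card = k ∧ ∀ u ∈ s, ∀ v ∈ s, u ≠ v → ¬ G.Adj u v}

/-!
A stable set of `Q(n)` meets every row at most once, so `α(Q(n)) ≤ n`; for `n = 2, 3` a finite
check shows that this bound is not attained and that one, resp. two, non-attacking queens fit.
For `n ≥ 4` the bound is attained by the classical explicit solutions of the `n`-queens
problem. For even `n = 2k` the rows of the upper half take the odd columns and those of the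
lower half the even ones, in increasing order, except when `k ≡ 1 (mod 3)`, where a shifted
pattern is used instead. Neither pattern meets the main diagonal, so for odd `n` a queen in the
corner `(n-1, n-1)` can be added to the solution for `n - 1`.
-/

theorem indepNum_eq_of_exists_of_forall_card_le {V : Type*} (G : SimpleGraph V) (m : ℕ)
    (hex : ∃ s : Finset V, s.card = m ∧ G.IsIndepSet s)
    (hle : ∀ s : Finset V, G.IsIndepSet s → s.card ≤ m) : indepNum G = m :=
  IsGreatest.csSup_eq ⟨hex, by rintro _ ⟨s, rfl, hs⟩; exact hle s hs⟩

theorem queensGraph_card_le_of_isIndepSet {n : ℕ} {s : Finset (Fin n × Fin n)}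
    (hs : (queensGraph n).IsIndepSet s) : s.card ≤ n := by
  have hinj : Set.InjOn Prod.fst (s : Set (Fin n × Fin n)) := fun u hu v hv huv ↦
    by_contra fun hne ↦ hs hu hv hne ⟨hne, Or.inl huv⟩
  simpa using Finset.card_le_card_of_injOn Prod.fst (fun _ _ ↦ Finset.mem_univ _) hinj

/-- `c i` is the column of the queen in row `i`. -/
structure IsQueensPlacement (n : ℕ) (c : ℕ → ℕ) : Prop where
  lt : ∀ i < n, c i < n
  nonattacking : ∀ i < n, ∀ j < n, i ≠ j →
    c i ≠ c j ∧ i + c i ≠ j + c j ∧ i + c j ≠ j + c i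

theorem IsQueensPlacement.exists_isIndepSet {n : ℕ} {c : ℕ → ℕ}
    (h : IsQueensPlacement n c) :
    ∃ s : Finset (Fin n × Fin n), s.card = n ∧ (queensGraph n).IsIndepSet s := by
  let queen (i : Fin n) : Fin n × Fin n := (i, ⟨c i, h.lt i i.2⟩)
  have hinj : Function.Injective queen := fun _ _ hij ↦ (Prod.ext_iff.1 hij).1
  refine ⟨Finset.univ.image queen, by simp [Finset.card_image_of_injective _ hinj], ?_⟩
  rw [Finset.coe_image]
  rintro _ ⟨i, -, rfl⟩ _ ⟨j, -, rfl⟩ hne ⟨-, hadj⟩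
  have hij : (i : ℕ) ≠ j := fun hij ↦ hne (by rw [Fin.ext hij])
  obtain ⟨hcol, hdiag, hanti⟩ := h.nonattacking i i.2 j j.2 hij
  simp only [queen, Fin.ext_iff] at hadj
  omega

theorem IsQueensPlacement.add_corner {m : ℕ} {c : ℕ → ℕ} (h : IsQueensPlacement m c)
    (hc : ∀ i < m, c i ≠ i) :
    IsQueensPlacement (m + 1) (fun i ↦ if i = m then m else c i) where
  lt i hi := by
    have := h.lt i
    split_ifs <;> omega
  nonattacking i hi j hj hij := by
    split_ifs with him hjm hjm
    · omega
    · have := h.lt j (by omega); have := hc j (by omega); omega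
    · have := h.lt i (by omega); have := hc i (by omega); omega
    · exact h.nonattacking i (by omega) j (by omega) hij

def stairColumn (k i : ℕ) : ℕ := if i < k then 2 * i + 1 else 2 * (i - k)

/-- Row `i < k` gets column `(2i + k - 1) mod 2k`; the lower half is the upper half rotated
by a half-turn. -/
def shiftedColumn (k i : ℕ) : ℕ :=
  if i < k then (if 2 * i ≤ k then 2 * i + k - 1 else 2 * i - k - 1)
  else (if 3 * k ≤ 2 * i + 2 then 2 * i + 2 - 3 * k else 2 * i + 2 - k)

theorem isQueensPlacement_stairColumn {k : ℕ} (h3 : k % 3 ≠ 1) :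
    IsQueensPlacement (2 * k) (stairColumn k) where
  lt i hi := by unfold stairColumn; split_ifs <;> omega
  nonattacking i hi j hj hij := by unfold stairColumn; split_ifs <;> omega

theorem isQueensPlacement_shiftedColumn {k : ℕ} (hk : 2 ≤ k) (h3 : k % 3 = 1) :
    IsQueensPlacement (2 * k) (shiftedColumn k) where
  lt i hi := by unfold shiftedColumn; split_ifs <;> omega
  nonattacking i hi j hj hij := by unfold shiftedColumn; split_ifs <;> omega

theorem stairColumn_ne_self {k i : ℕ} (hi : i < 2 * k) : stairColumn k i ≠ i := by
  unfold stairColumn; split_ifs <;> omega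

theorem shiftedColumn_ne_self {k i : ℕ} (hk : 2 ≤ k) (hi : i < 2 * k) :
    shiftedColumn k i ≠ i := by
  unfold shiftedColumn; split_ifs <;> omega

theorem exists_isQueensPlacement_two_mul {k : ℕ} (hk : 2 ≤ k) :
    ∃ c, IsQueensPlacement (2 * k) c ∧ ∀ i < 2 * k, c i ≠ i := by
  by_cases h3 : k % 3 = 1
  · exact ⟨_, isQueensPlacement_shiftedColumn hk h3, fun _ ↦ shiftedColumn_ne_self hk⟩
  · exact ⟨_, isQueensPlacement_stairColumn h3, fun _ ↦ stairColumn_ne_self⟩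

theorem exists_isQueensPlacement {n : ℕ} (hn : 4 ≤ n) : ∃ c, IsQueensPlacement n c := by
  obtain ⟨k, rfl | rfl⟩ := Nat.even_or_odd' n
  · exact (exists_isQueensPlacement_two_mul (by omega)).imp fun _ ↦ And.left
  · obtain ⟨c, hc, hdiag⟩ := exists_isQueensPlacement_two_mul (k := k) (by omega)
    exact ⟨_, hc.add_corner hdiag⟩

set_option maxRecDepth 10000 in
/-- `α(Q(2)) = 1`, `α(Q(3)) = 2` and `α(Q(n)) = n` for `n ≥ 4`. -/
theorem queens_indepNum :
    indepNum (queensGraph 2) = 1 ∧ indepNum (queensGraph 3) = 2 ∧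
      ∀ n : ℕ, 4 ≤ n → indepNum (queensGraph n) = n := by
  refine ⟨?_, ?_, fun n hn ↦ ?_⟩
  · exact indepNum_eq_of_exists_of_forall_card_le _ 1 ⟨{(0, 0)}, rfl, by decide⟩ (by decide)
  · exact indepNum_eq_of_exists_of_forall_card_le _ 2 ⟨{(0, 0), (1, 2)}, rfl, by decide⟩
      (by decide)
  · obtain ⟨c, hc⟩ := exists_isQueensPlacement hn
    exact indepNum_eq_of_exists_of_forall_card_le _ n hc.exists_isIndepSet
      fun _ ↦ queensGraph_card_le_of_isIndepSet
end

section
/- If n ≥ 1 and n ≡ 1 (mod 6) or n ≡ 5 (mod 6), then the chromatic number of the n-Queens' graph Q(n) equals n. (An explicit proper coloring assigns to the square in row i and column j, with coordinates taken in {0,1,…,n−1}, the color (j − 2i) mod n.) -/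
def queensGraph.diagonalHom (n : ℕ) : (⊤ : SimpleGraph (Fin n)) →g queensGraph n where
  toFun j := (j, j)
  map_rel' hjk := ⟨by simpa using hjk, Or.inr <| Or.inr <| Or.inr <| add_comm _ _⟩

theorem queensGraph.card_le_chromaticNumber (n : ℕ) :
    (n : ℕ∞) ≤ (queensGraph n).chromaticNumber := by
  simpa using SimpleGraph.chromaticNumber_mono_of_hom (queensGraph.diagonalHom n)

/-- Along the directions `(1,0)`, `(0,1)`, `(1,-1)`, `(1,1)` the form `(i, j) ↦ j - 2 i` changes
by multiples of `-2`, `1`, `-3`, `-1`, so it is injective on every line of the board once `2` and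
`3` are units. -/
theorem eq_and_eq_of_sub_two_mul_eq {R : Type*} [CommRing R] {a b c d : R}
    (h2 : IsUnit (2 : R)) (h3 : IsUnit (3 : R))
    (hline : a = c ∨ b = d ∨ a + b = c + d ∨ a + d = c + b) (hcol : b - 2 * a = d - 2 * c) :
    a = c ∧ b = d := by
  suffices hac : a = c from ⟨hac, by linear_combination hcol + 2 * hac⟩
  rcases hline with hrow | hcolumn | hanti | hdiag
  · exact hrow
  · exact h2.mul_left_cancel (by linear_combination hcolumn - hcol)
  · exact h3.mul_left_cancel (by linear_combination hanti - hcol)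
  · linear_combination -hcol - hdiag

theorem Fin.natCast_val_injective (n : ℕ) : Function.Injective fun i : Fin n => (i.val : ZMod n) :=
  fun i j hij => Fin.ext <| by
    simpa [Nat.mod_eq_of_lt i.isLt, Nat.mod_eq_of_lt j.isLt] using
      (ZMod.natCast_eq_natCast_iff' _ _ _).mp hij

def queensGraph.coloring (n : ℕ) (h2 : IsUnit (2 : ZMod n)) (h3 : IsUnit (3 : ZMod n)) :
    (queensGraph n).Coloring (ZMod n) :=
  SimpleGraph.Coloring.mk (fun p => (p.2.val : ZMod n) - 2 * (p.1.val : ZMod n)) <| by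
    rintro ⟨i, j⟩ ⟨k, l⟩ ⟨hne, hline⟩ hcol
    let toZMod (x : Fin n) : ZMod n := x.val
    have hline' : (i.val : ZMod n) = k.val ∨ (j.val : ZMod n) = l.val ∨
        (i.val : ZMod n) + j.val = k.val + l.val ∨ (i.val : ZMod n) + l.val = k.val + j.val := by
      rcases hline with h | h | h | h
      exacts [Or.inl (congrArg toZMod h), Or.inr (Or.inl (congrArg toZMod h)),
        Or.inr (Or.inr (Or.inl (by exact_mod_cast congrArg Nat.cast h))),
        Or.inr (Or.inr (Or.inr (by exact_mod_cast congrArg Nat.cast h)))]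
    obtain ⟨hik, hjl⟩ := eq_and_eq_of_sub_two_mul_eq h2 h3 hline' hcol
    exact hne (Prod.ext (Fin.natCast_val_injective n hik) (Fin.natCast_val_injective n hjl))

theorem queensGraph.colorable_of_coprime_six {n : ℕ} (hn : n.Coprime 6) :
    (queensGraph n).Colorable n := by
  have : NeZero n := ⟨by rintro rfl; norm_num at hn⟩
  have isUnit_of_dvd_six {m : ℕ} (hm : m ∣ 6) : IsUnit (m : ZMod n) :=
    (ZMod.isUnit_iff_coprime m n).mpr (hn.coprime_dvd_right hm).symm
  simpa using (queensGraph.coloring n (by exact_mod_cast isUnit_of_dvd_six (m := 2) (by norm_num))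
    (by exact_mod_cast isUnit_of_dvd_six (m := 3) (by norm_num))).colorable

theorem queens_chromatic_of_mod_six_general (n : ℕ)
    (h : n % 6 = 1 ∨ n % 6 = 5) :
    (queensGraph n).chromaticNumber = n := by
  have hn : n.Coprime 6 := by
    rw [Nat.Coprime, Nat.gcd_comm, Nat.gcd_rec]
    rcases h with h | h <;> rw [h] <;> rfl
  exact le_antisymm (queensGraph.colorable_of_coprime_six hn).chromaticNumber_le
    (queensGraph.card_le_chromaticNumber n)

/-- if `n ≡ 1, 5 (mod 6)` then `χ(Q(n)) = n`. -/
theorem queens_chromatic_of_mod_six (n : ℕ) (hn : 1 ≤ n)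
    (h : n % 6 = 1 ∨ n % 6 = 5) :
    (queensGraph n).chromaticNumber = n :=
  queens_chromatic_of_mod_six_general n h
end

section
/- For every n ≥ 5, the chromatic number of the n-Queens' graph satisfies n ≤ χ(Q(n)); moreover χ(Q(n)) = n if n ≡ 1 or 5 (mod 6), and χ(Q(n)) ≤ n + 3 otherwise. -/
namespace Nat

lemma coprime_six_iff (m : ℕ) : m.Coprime 6 ↔ m % 6 = 1 ∨ m % 6 = 5 := by
  rw [Coprime, gcd_comm, gcd_rec]
  have : m % 6 < 6 := mod_lt _ (by norm_num)
  interval_cases m % 6 <;> decide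

lemma exists_coprime_six_between (n : ℕ) : ∃ m, n ≤ m ∧ m ≤ n + 3 ∧ m.Coprime 6 := by
  simp only [coprime_six_iff]
  rcases (by omega : n % 6 = 0 ∨ n % 6 = 1 ∨ n % 6 = 2 ∨ n % 6 = 3 ∨ n % 6 = 4 ∨ n % 6 = 5)
    with h | h | h | h | h | h
  · exact ⟨n + 1, by omega⟩
  · exact ⟨n, by omega⟩
  · exact ⟨n + 3, by omega⟩
  · exact ⟨n + 2, by omega⟩
  · exact ⟨n + 1, by omega⟩
  · exact ⟨n, by omega⟩

end Nat

lemma Int.eq_zero_of_dvd_mul_of_isCoprime {m c x : ℤ} (hc : IsCoprime m c) (h : m ∣ c * x)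
    (hx : |x| < m) : x = 0 :=
  Int.eq_zero_of_abs_lt_dvd (hc.dvd_of_dvd_mul_left h) hx

namespace queensGraph

lemma adj_iff_int {n : ℕ} {u v : Fin n × Fin n} :
    (queensGraph n).Adj u v ↔ u ≠ v ∧
      ((u.1 - v.1 : ℤ) = 0 ∨ (u.2 - v.2 : ℤ) = 0 ∨
        (u.1 - v.1 : ℤ) + (u.2 - v.2) = 0 ∨ (u.1 - v.1 : ℤ) = u.2 - v.2) := by
  obtain ⟨⟨i, hi⟩, ⟨j, hj⟩⟩ := u
  obtain ⟨⟨p, hp⟩, ⟨q, hq⟩⟩ := v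
  simp only [queensGraph, ne_eq, Prod.mk.injEq, Fin.mk.injEq]
  omega

lemma le_chromaticNumber (n : ℕ) : (n : ℕ∞) ≤ (queensGraph n).chromaticNumber := by
  let diagonal : (⊤ : SimpleGraph (Fin n)) →g queensGraph n :=
    ⟨fun j => (j, j), fun hjk => ⟨by simpa using hjk, .inr (.inr (.inr (add_comm _ _)))⟩⟩
  simpa using SimpleGraph.chromaticNumber_mono_of_hom diagonal

lemma colorable_of_isCoprime {n m : ℕ} [NeZero m] (hnm : n ≤ m) {a b : ℤ}
    (ha : IsCoprime (m : ℤ) a) (hb : IsCoprime (m : ℤ) b)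
    (hab : IsCoprime (m : ℤ) (a + b)) (hab' : IsCoprime (m : ℤ) (a - b)) :
    (queensGraph n).Colorable m := by
  let C : (queensGraph n).Coloring (ZMod m) :=
    SimpleGraph.Coloring.mk (fun u => ((a * u.1 + b * u.2 : ℤ) : ZMod m)) <| by
      intro u v huv hcol
      obtain ⟨hne, hline⟩ := adj_iff_int.mp huv
      set d : ℤ := u.1 - v.1 with hd
      set e : ℤ := u.2 - v.2 with he
      have hdvd : (m : ℤ) ∣ a * d + b * e := by
        obtain ⟨k, hk⟩ := (ZMod.intCast_eq_intCast_iff_dvd_sub _ _ _).mp hcol.symm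
        exact ⟨k, by rw [hd, he, ← hk]; ring⟩
      have hd_lt : |d| < m := abs_sub_lt_iff.mpr ⟨by omega, by omega⟩
      have he_lt : |e| < m := abs_sub_lt_iff.mpr ⟨by omega, by omega⟩
      suffices d = 0 ∧ e = 0 from hne (Prod.ext (Fin.ext (by omega)) (Fin.ext (by omega)))
      rcases hline with h | h | h | h
      · exact ⟨h, Int.eq_zero_of_dvd_mul_of_isCoprime hb (by simpa [h] using hdvd) he_lt⟩
      · exact ⟨Int.eq_zero_of_dvd_mul_of_isCoprime ha (by simpa [h] using hdvd) hd_lt, h⟩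
      · have hd0 : d = 0 := Int.eq_zero_of_dvd_mul_of_isCoprime hab'
          (by rwa [show e = -d by omega, mul_neg, ← sub_eq_add_neg, ← sub_mul] at hdvd) hd_lt
        omega
      · have hd0 : d = 0 := Int.eq_zero_of_dvd_mul_of_isCoprime hab
          (by rwa [← h, ← add_mul] at hdvd) hd_lt
        omega
  simpa using C.colorable

lemma colorable_of_coprime_six_s7 {n m : ℕ} (hnm : n ≤ m) (hm : m.Coprime 6) :
    (queensGraph n).Colorable m := by
  have : NeZero m := ⟨by rintro rfl; simp at hm⟩
  have h2 : IsCoprime (m : ℤ) 2 :=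
    Nat.isCoprime_iff_coprime.mpr (hm.coprime_dvd_right (by norm_num))
  have h3 : IsCoprime (m : ℤ) 3 :=
    Nat.isCoprime_iff_coprime.mpr (hm.coprime_dvd_right (by norm_num))
  exact colorable_of_isCoprime hnm (a := 2) (b := 1) h2 isCoprime_one_right
    (by norm_num [h3]) (by norm_num [isCoprime_one_right])

end queensGraph

theorem queens_chromatic_bounds_general (n : ℕ) :
    (n : ℕ∞) ≤ (queensGraph n).chromaticNumber ∧
      ((n % 6 = 1 ∨ n % 6 = 5) → (queensGraph n).chromaticNumber = n) ∧
      (¬ (n % 6 = 1 ∨ n % 6 = 5) → (queensGraph n).chromaticNumber ≤ (n : ℕ∞) + 3) := by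
  refine ⟨queensGraph.le_chromaticNumber n, fun hn => ?_, fun _ => ?_⟩
  · have hcol := queensGraph.colorable_of_coprime_six_s7 le_rfl ((Nat.coprime_six_iff n).mpr hn)
    exact le_antisymm hcol.chromaticNumber_le (queensGraph.le_chromaticNumber n)
  · obtain ⟨m, hnm, hmn, hm⟩ := Nat.exists_coprime_six_between n
    calc (queensGraph n).chromaticNumber ≤ m :=
          (queensGraph.colorable_of_coprime_six_s7 hnm hm).chromaticNumber_le
      _ ≤ n + 3 := by exact_mod_cast hmn

/-- for `n ≥ 5`, `n ≤ χ(Q(n))`; moreover `χ(Q(n)) = n` if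
`n ≡ 1, 5 (mod 6)` and `χ(Q(n)) ≤ n + 3` otherwise. -/
theorem queens_chromatic_bounds (n : ℕ) (hn : 5 ≤ n) :
    (n : ℕ∞) ≤ (queensGraph n).chromaticNumber ∧
      ((n % 6 = 1 ∨ n % 6 = 5) → (queensGraph n).chromaticNumber = n) ∧
      (¬ (n % 6 = 1 ∨ n % 6 = 5) → (queensGraph n).chromaticNumber ≤ (n : ℕ∞) + 3) :=
  queens_chromatic_bounds_general n
end

section
/- For every natural number n ≥ 1, every real eigenvalue μ of the adjacency matrix of the n-Queens' graph Q(n) satisfies μ ≥ −4. -/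
open Matrix

section FiberMatrix

variable {V ι : Type*} (R : Type*) [DecidableEq ι]

def fiberMatrix [Zero R] [One R] (f : V → ι) : Matrix V V R :=
  of fun u v => if f u = f v then 1 else 0

def fiberIncidence [Zero R] [One R] (f : V → ι) : Matrix (Set.range f) V R :=
  of fun k u => if f u = k then 1 else 0

variable {R} [Fintype V] [CommRing R] [StarRing R]

theorem fiberMatrix_eq_conjTranspose_mul_self (f : V → ι) :
    fiberMatrix R f = (fiberIncidence R f)ᴴ * fiberIncidence R f := by
  ext u v
  rw [mul_apply, Fintype.sum_eq_single ⟨f u, Set.mem_range_self u⟩]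
  · by_cases h : f u = f v <;> simp [fiberMatrix, fiberIncidence, h, eq_comm]
  · intro k hne
    have : f u ≠ k := fun h => hne (Subtype.ext h.symm)
    simp [fiberIncidence, this]

theorem posSemidef_fiberMatrix [PartialOrder R] [StarOrderedRing R] (f : V → ι) :
    (fiberMatrix R f).PosSemidef := by
  rw [fiberMatrix_eq_conjTranspose_mul_self]
  exact posSemidef_conjTranspose_mul_self _

end FiberMatrix

theorem neg_le_of_posSemidef_add_smul_one {V : Type*} [Fintype V] [DecidableEq V]
    {M : Matrix V V ℝ} {c μ : ℝ} (hM : (M + c • 1).PosSemidef) {x : V → ℝ} (hx : x ≠ 0)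
    (hμ : M *ᵥ x = μ • x) : -c ≤ μ := by
  have hquad : star x ⬝ᵥ ((M + c • 1) *ᵥ x) = (μ + c) * (star x ⬝ᵥ x) := by
    rw [add_mulVec, hμ, smul_mulVec, one_mulVec, ← add_smul, dotProduct_smul, smul_eq_mul]
  have hnonneg := hM.dotProduct_mulVec_nonneg x
  rw [hquad] at hnonneg
  have := nonneg_of_mul_nonneg_left hnonneg (dotProduct_star_self_pos_iff.mpr hx)
  linarith

theorem queensGraph_adjMatrix_add_four_smul_one {R : Type*} [Ring R] (n : ℕ) :
    (queensGraph n).adjMatrix R + (4 : R) • 1 =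
      fiberMatrix R Prod.fst + fiberMatrix R Prod.snd +
        fiberMatrix R (fun u : Fin n × Fin n => u.1.val + u.2.val) +
        fiberMatrix R (fun u : Fin n × Fin n => (u.1.val : ℤ) - u.2.val) := by
  ext ⟨i, j⟩ ⟨p, q⟩
  simp only [Matrix.add_apply, Matrix.smul_apply, one_apply, fiberMatrix, of_apply,
    SimpleGraph.adjMatrix_apply]
  simp only [queensGraph, ne_eq, Prod.mk.injEq, ← Fin.val_inj]
  split_ifs <;> first | (exfalso; omega) | norm_num

theorem queens_eigenvalue_ge_neg_four_general (n : ℕ) (μ : ℝ)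
    (x : Fin n × Fin n → ℝ) (hx : x ≠ 0)
    (hμ : ((queensGraph n).adjMatrix ℝ).mulVec x = μ • x) :
    -4 ≤ μ := by
  have hpsd : ((queensGraph n).adjMatrix ℝ + (4 : ℝ) • 1).PosSemidef := by
    rw [queensGraph_adjMatrix_add_four_smul_one]
    exact (((posSemidef_fiberMatrix _).add (posSemidef_fiberMatrix _)).add
      (posSemidef_fiberMatrix _)).add (posSemidef_fiberMatrix _)
  exact neg_le_of_posSemidef_add_smul_one hpsd hx hμ

/-- every real eigenvalue of the adjacency matrix of `Q(n)` is at
least `-4`. -/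
theorem queens_eigenvalue_ge_neg_four (n : ℕ) (hn : 1 ≤ n) (μ : ℝ)
    (x : Fin n × Fin n → ℝ) (hx : x ≠ 0)
    (hμ : ((queensGraph n).adjMatrix ℝ).mulVec x = μ • x) :
    -4 ≤ μ :=
  queens_eigenvalue_ge_neg_four_general n μ x hx hμ
end

section
/- Let n ≥ 4 and index the vertices of the n-Queens' graph Q(n) by pairs (i,j) with 1 ≤ i,j ≤ n. A nonzero real vector X = (x_{(i,j)}) is an eigenvector of the adjacency matrix of Q(n) for the eigenvalue −4 if and only if all of the following hold: (a) for every k with 1 ≤ k ≤ n, Σ_{j=1}^n x_{(k,j)} = 0 and Σ_{i=1}^n x_{(i,k)} = 0; (b) for every k with 1 ≤ k ≤ 2n−3, Σ_{i+j = k+2} x_{(i,j)} = 0; (c) for every k with 1 ≤ k ≤ 2n−3, Σ_{i−j = k+1−n} x_{(i,j)} = 0; and (d) x_{(1,1)} = x_{(1,n)} = x_{(n,1)} = x_{(n,n)} = 0. Consequently, −4 is an eigenvalue of Q(n) if and only if such a nonzero vector exists. -/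
/-!
Every square lies on exactly four lines (its row, column, diagonal and antidiagonal), and two
distinct squares share at most one line, sharing one exactly when they are adjacent. Hence
`A + 4 I = N Nᵀ` for the square–line incidence matrix `N`: the value of `(A + 4 I) x` at `u` is the
sum of the line sums of `x` over the four lines through `u`, and `⟪x, (A + 4 I) x⟫` is the sum of
the squares of all line sums. So `A x = -4 x` exactly when every line sum of `x` vanishes. Among
the diagonal lines, those of a single square are the four corners, which gives condition (d).
-/

open Finset Matrix

section LineSums

variable {V ι β : Type*} [Fintype V] [DecidableEq β]

noncomputable def fiberSum (f : V → β) (x : V → ℝ) (b : β) : ℝ :=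
  ∑ v, if f v = b then x v else 0

theorem fiberSum_eq_zero_of_forall_ne {f : V → β} {b : β} (h : ∀ v, f v ≠ b) (x : V → ℝ) :
    fiberSum f x b = 0 :=
  sum_eq_zero fun v _ => if_neg (h v)

theorem fiberSum_eq_of_forall_eq_iff [DecidableEq V] {f : V → β} {b : β} {v₀ : V}
    (h : ∀ v, f v = b ↔ v = v₀) (x : V → ℝ) : fiberSum f x b = x v₀ := by
  simp only [fiberSum, h, sum_ite_eq', mem_univ, if_true]

theorem forall_fiberSum_eq_zero_iff (f : V → β) (x : V → ℝ) :
    (∀ b, fiberSum f x b = 0) ↔ ∀ u, fiberSum f x (f u) = 0 := by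
  refine ⟨fun h u => h (f u), fun h b => ?_⟩
  by_cases hb : ∃ u, f u = b
  · obtain ⟨u, rfl⟩ := hb
    exact h u
  · exact fiberSum_eq_zero_of_forall_ne (fun v hv => hb ⟨v, hv⟩) x

theorem sum_mul_fiberSum (f : V → β) (x : V → ℝ) :
    ∑ u, x u * fiberSum f x (f u) = ∑ b ∈ univ.image f, fiberSum f x b ^ 2 := by
  rw [← sum_fiberwise_of_maps_to (g := f) (t := univ.image f)
    (fun u _ => mem_image_of_mem f (mem_univ u))]
  refine sum_congr rfl fun b _ => ?_
  calc ∑ u ∈ univ.filter (f · = b), x u * fiberSum f x (f u)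
      = ∑ u ∈ univ.filter (f · = b), x u * fiberSum f x b :=
        sum_congr rfl fun u hu => by rw [(mem_filter.mp hu).2]
    _ = fiberSum f x b ^ 2 := by rw [← sum_mul, sum_filter, sq]; rfl

theorem fiberSum_eq_zero_of_forall_sum_fiberSum_eq_zero [Fintype ι] (f : ι → V → β)
    (x : V → ℝ) (h : ∀ u, ∑ i, fiberSum (f i) x (f i u) = 0) (i : ι) (b : β) :
    fiberSum (f i) x b = 0 := by
  have hsq : ∑ i, ∑ b ∈ univ.image (f i), fiberSum (f i) x b ^ 2 = 0 := by
    simp_rw [← sum_mul_fiberSum]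
    rw [sum_comm]
    simp [← mul_sum, h]
  have hi := (sum_eq_zero_iff_of_nonneg fun i _ => sum_nonneg fun b _ => sq_nonneg _).mp hsq i
    (mem_univ i)
  rw [sum_eq_zero_iff_of_nonneg fun b _ => sq_nonneg _] at hi
  refine (forall_fiberSum_eq_zero_iff (f i) x).mpr (fun u => ?_) b
  exact pow_eq_zero_iff two_ne_zero |>.mp (hi (f i u) (mem_image_of_mem _ (mem_univ u)))

end LineSums

section CollinearityGraph

variable {V ι β : Type*} [Fintype V] [DecidableEq V] [Fintype ι] [DecidableEq β]

theorem adjMatrix_mulVec_add_card_mul (G : SimpleGraph V) [DecidableRel G.Adj]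
    (f : ι → V → β) (hG : ∀ u v, u ≠ v → #{i | f i u = f i v} = if G.Adj u v then 1 else 0)
    (x : V → ℝ) (u : V) :
    (G.adjMatrix ℝ *ᵥ x) u + Fintype.card ι * x u = ∑ i, fiberSum (f i) x (f i u) := by
  have hcoeff : ∀ v, (#{i | f i u = f i v} : ℝ) * x v
      = (if G.Adj u v then x v else 0) + if u = v then Fintype.card ι * x v else 0 := by
    intro v
    rcases eq_or_ne u v with rfl | huv
    · simp
    · split_ifs with hadj <;> simp [hG u v huv, hadj]
  simp only [fiberSum]
  rw [sum_comm]
  simp only [← sum_filter, sum_const, nsmul_eq_mul]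
  simp_rw [eq_comm (a := f _ _) (b := f _ u), hcoeff, sum_add_distrib]
  simp [mulVec, dotProduct, SimpleGraph.adjMatrix_apply]

theorem adjMatrix_mulVec_eq_neg_card_smul_iff (G : SimpleGraph V) [DecidableRel G.Adj]
    (f : ι → V → β) (hG : ∀ u v, u ≠ v → #{i | f i u = f i v} = if G.Adj u v then 1 else 0)
    (x : V → ℝ) :
    G.adjMatrix ℝ *ᵥ x = -(Fintype.card ι : ℝ) • x ↔ ∀ i b, fiberSum (f i) x b = 0 := by
  have hsum : G.adjMatrix ℝ *ᵥ x = -(Fintype.card ι : ℝ) • x ↔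
      ∀ u, ∑ i, fiberSum (f i) x (f i u) = 0 := by
    refine funext_iff.trans (forall_congr' fun u => ?_)
    rw [← adjMatrix_mulVec_add_card_mul G f hG, Pi.smul_apply, smul_eq_mul]
    constructor <;> intro h <;> linarith
  rw [hsum]
  exact ⟨fiberSum_eq_zero_of_forall_sum_fiberSum_eq_zero f x,
    fun h u => sum_eq_zero fun i _ => h i _⟩

end CollinearityGraph

namespace Queens

variable {n : ℕ}

def line (n : ℕ) : Fin 4 → Fin n × Fin n → ℤ :=
  ![fun p => p.1.val, fun p => p.2.val, fun p => p.1.val + p.2.val, fun p => p.1.val - p.2.val]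

theorem card_line_eq (u v : Fin n × Fin n) (huv : u ≠ v) :
    #{i | line n i u = line n i v} = if (queensGraph n).Adj u v then 1 else 0 := by
  have huv' : ¬(u.1.val = v.1.val ∧ u.2.val = v.2.val) := fun h =>
    huv (Prod.ext (Fin.ext h.1) (Fin.ext h.2))
  rw [card_filter, Fin.sum_univ_four]
  simp [line, queensGraph, Fin.ext_iff, huv]
  split_ifs <;> omega

theorem fiberSum_line_zero_val (x : Fin n × Fin n → ℝ) (k : Fin n) :
    fiberSum (line n 0) x k.val = ∑ j, x (k, j) := by
  simp only [fiberSum, line, Fintype.sum_prod_type]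
  rw [sum_comm]
  simp [Fin.val_inj]

theorem fiberSum_line_one_val (x : Fin n × Fin n → ℝ) (k : Fin n) :
    fiberSum (line n 1) x k.val = ∑ i, x (i, k) := by
  simp only [fiberSum, line, Fintype.sum_prod_type_right]
  rw [sum_comm]
  simp [Fin.val_inj]

theorem fiberSum_line_two_natCast (x : Fin n × Fin n → ℝ) (k : ℕ) :
    fiberSum (line n 2) x k = ∑ p : Fin n × Fin n, if p.1.val + p.2.val = k then x p else 0 := by
  simp only [fiberSum, line, Matrix.cons_val, ← Nat.cast_add, Nat.cast_inj]

theorem fiberSum_line_three (x : Fin n × Fin n → ℝ) (t : ℤ) :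
    fiberSum (line n 3) x t =
      ∑ p : Fin n × Fin n, if (p.1.val : ℤ) - (p.2.val : ℤ) = t then x p else 0 :=
  rfl

theorem fiberSum_line_two_zero (hn : 0 < n) (x : Fin n × Fin n → ℝ) :
    fiberSum (line n 2) x 0 = x (⟨0, hn⟩, ⟨0, hn⟩) :=
  fiberSum_eq_of_forall_eq_iff (fun p => by simp [line, Prod.ext_iff, Fin.ext_iff]; omega) x

theorem fiberSum_line_two_top (hn : 0 < n) (x : Fin n × Fin n → ℝ) :
    fiberSum (line n 2) x (2 * n - 2 : ℕ) = x (⟨n - 1, by omega⟩, ⟨n - 1, by omega⟩) :=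
  fiberSum_eq_of_forall_eq_iff (fun p => by simp [line, Prod.ext_iff, Fin.ext_iff]; omega) x

theorem fiberSum_line_three_bot (hn : 0 < n) (x : Fin n × Fin n → ℝ) :
    fiberSum (line n 3) x (1 - n) = x (⟨0, hn⟩, ⟨n - 1, by omega⟩) :=
  fiberSum_eq_of_forall_eq_iff (fun p => by simp [line, Prod.ext_iff, Fin.ext_iff]; omega) x

theorem fiberSum_line_three_top (hn : 0 < n) (x : Fin n × Fin n → ℝ) :
    fiberSum (line n 3) x (n - 1) = x (⟨n - 1, by omega⟩, ⟨0, hn⟩) :=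
  fiberSum_eq_of_forall_eq_iff (fun p => by simp [line, Prod.ext_iff, Fin.ext_iff]; omega) x

/-- Conditions (a)–(d); squares are `0`-based, so the paper's diagonal `i + j = k + 2` is
`i + j = k` here. -/
def LineSumsVanish (n : ℕ) (hn : 0 < n) (x : Fin n × Fin n → ℝ) : Prop :=
  (∀ k : Fin n, (∑ j : Fin n, x (k, j)) = 0 ∧ (∑ i : Fin n, x (i, k)) = 0) ∧
    (∀ k : ℕ, 1 ≤ k → k ≤ 2 * n - 3 →
      (∑ p : Fin n × Fin n, if p.1.val + p.2.val = k then x p else 0) = 0) ∧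
    (∀ k : ℕ, 1 ≤ k → k ≤ 2 * n - 3 →
      (∑ p : Fin n × Fin n,
        if (p.1.val : ℤ) - (p.2.val : ℤ) = (k : ℤ) + 1 - (n : ℤ) then x p else 0) = 0) ∧
    (x (⟨0, hn⟩, ⟨0, hn⟩) = 0 ∧ x (⟨0, hn⟩, ⟨n - 1, by omega⟩) = 0 ∧
      x (⟨n - 1, by omega⟩, ⟨0, hn⟩) = 0 ∧ x (⟨n - 1, by omega⟩, ⟨n - 1, by omega⟩) = 0)

theorem lineSumsVanish_of_forall_fiberSum_eq_zero (hn : 0 < n) (x : Fin n × Fin n → ℝ)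
    (h : ∀ i b, fiberSum (line n i) x b = 0) : LineSumsVanish n hn x := by
  refine ⟨fun k => ⟨?_, ?_⟩, fun k _ _ => ?_, fun k _ _ => h 3 _, ?_, ?_, ?_, ?_⟩
  · rw [← fiberSum_line_zero_val]; exact h 0 _
  · rw [← fiberSum_line_one_val]; exact h 1 _
  · rw [← fiberSum_line_two_natCast]; exact h 2 _
  · exact (fiberSum_line_two_zero hn x).symm.trans (h 2 _)
  · exact (fiberSum_line_three_bot hn x).symm.trans (h 3 _)
  · exact (fiberSum_line_three_top hn x).symm.trans (h 3 _)
  · exact (fiberSum_line_two_top hn x).symm.trans (h 2 _)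

theorem fiberSum_line_eq_zero_of_lineSumsVanish (hn : 0 < n) (x : Fin n × Fin n → ℝ)
    (hx : LineSumsVanish n hn x) (i : Fin 4) (u : Fin n × Fin n) :
    fiberSum (line n i) x (line n i u) = 0 := by
  obtain ⟨hrc, hdiag, hanti, hc₀₀, hc₀₁, hc₁₀, hc₁₁⟩ := hx
  have hu₁ := u.1.isLt
  have hu₂ := u.2.isLt
  fin_cases i
  · exact (fiberSum_line_zero_val x u.1).trans (hrc u.1).1
  · exact (fiberSum_line_one_val x u.2).trans (hrc u.2).2
  · change fiberSum (line n 2) x (u.1.val + u.2.val : ℕ) = 0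
    by_cases h0 : u.1.val + u.2.val = 0
    · rw [h0, Nat.cast_zero, fiberSum_line_two_zero hn]; exact hc₀₀
    by_cases htop : u.1.val + u.2.val = 2 * n - 2
    · rw [htop, fiberSum_line_two_top hn]; exact hc₁₁
    rw [fiberSum_line_two_natCast]
    exact hdiag _ (by omega) (by omega)
  · change fiberSum (line n 3) x ((u.1.val : ℤ) - u.2.val) = 0
    by_cases hbot : (u.1.val : ℤ) - u.2.val = 1 - n
    · rw [hbot, fiberSum_line_three_bot hn]; exact hc₀₁
    by_cases htop : (u.1.val : ℤ) - u.2.val = n - 1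
    · rw [htop, fiberSum_line_three_top hn]; exact hc₁₀
    obtain ⟨k, hk⟩ : ∃ k : ℕ, (k : ℤ) = u.1.val - u.2.val + n - 1 :=
      ⟨_, Int.toNat_of_nonneg (by omega)⟩
    rw [fiberSum_line_three, show (u.1.val : ℤ) - u.2.val = k + 1 - n by omega]
    exact hanti k (by omega) (by omega)

theorem lineSumsVanish_iff (hn : 0 < n) (x : Fin n × Fin n → ℝ) :
    LineSumsVanish n hn x ↔ ∀ i b, fiberSum (line n i) x b = 0 :=
  ⟨fun hx i => (forall_fiberSum_eq_zero_iff _ x).mpr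
      (fiberSum_line_eq_zero_of_lineSumsVanish hn x hx i),
    lineSumsVanish_of_forall_fiberSum_eq_zero hn x⟩

theorem adjMatrix_mulVec_eq_neg_four_smul_iff (hn : 0 < n) (x : Fin n × Fin n → ℝ) :
    (queensGraph n).adjMatrix ℝ *ᵥ x = (-4 : ℝ) • x ↔ LineSumsVanish n hn x := by
  have h := adjMatrix_mulVec_eq_neg_card_smul_iff (queensGraph n) (line n) card_line_eq x
  rw [Fintype.card_fin, Nat.cast_ofNat] at h
  rw [h, lineSumsVanish_iff]

end Queens

/-- for `n ≥ 4`, a nonzero vector `X` is an eigenvector of the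
adjacency matrix of `Q(n)` for `-4` iff all row sums, column sums, the sums over
the `2n-3` diagonals of each direction having at least two squares, vanish and
`X` is zero on the four corners.  (Coordinates are `0`-based: square `(i,j)`,
`0 ≤ i,j ≤ n-1`, corresponds to the `1`-based square `(i+1, j+1)`.)
Consequently, `-4` is an eigenvalue of `Q(n)` iff such a nonzero vector exists. -/
theorem queens_neg_four_eigenvector_iff (n : ℕ) (hn : 4 ≤ n) :
    (∀ x : Fin n × Fin n → ℝ, x ≠ 0 →
      (((queensGraph n).adjMatrix ℝ).mulVec x = (-4 : ℝ) • x ↔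
        ((∀ k : Fin n, (∑ j : Fin n, x (k, j)) = 0 ∧ (∑ i : Fin n, x (i, k)) = 0) ∧
          (∀ k : ℕ, 1 ≤ k → k ≤ 2 * n - 3 →
            (∑ p : Fin n × Fin n, if p.1.val + p.2.val = k then x p else 0) = 0) ∧
          (∀ k : ℕ, 1 ≤ k → k ≤ 2 * n - 3 →
            (∑ p : Fin n × Fin n,
              if (p.1.val : ℤ) - (p.2.val : ℤ) = (k : ℤ) + 1 - (n : ℤ) then x p else 0) = 0) ∧
          (x (⟨0, by omega⟩, ⟨0, by omega⟩) = 0 ∧ x (⟨0, by omega⟩, ⟨n - 1, by omega⟩) = 0 ∧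
            x (⟨n - 1, by omega⟩, ⟨0, by omega⟩) = 0 ∧
            x (⟨n - 1, by omega⟩, ⟨n - 1, by omega⟩) = 0)))) ∧
    ((∃ x : Fin n × Fin n → ℝ, x ≠ 0 ∧
        ((queensGraph n).adjMatrix ℝ).mulVec x = (-4 : ℝ) • x) ↔
      (∃ x : Fin n × Fin n → ℝ, x ≠ 0 ∧
        (∀ k : Fin n, (∑ j : Fin n, x (k, j)) = 0 ∧ (∑ i : Fin n, x (i, k)) = 0) ∧
        (∀ k : ℕ, 1 ≤ k → k ≤ 2 * n - 3 →
          (∑ p : Fin n × Fin n, if p.1.val + p.2.val = k then x p else 0) = 0) ∧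
        (∀ k : ℕ, 1 ≤ k → k ≤ 2 * n - 3 →
          (∑ p : Fin n × Fin n,
            if (p.1.val : ℤ) - (p.2.val : ℤ) = (k : ℤ) + 1 - (n : ℤ) then x p else 0) = 0) ∧
        (x (⟨0, by omega⟩, ⟨0, by omega⟩) = 0 ∧ x (⟨0, by omega⟩, ⟨n - 1, by omega⟩) = 0 ∧
          x (⟨n - 1, by omega⟩, ⟨0, by omega⟩) = 0 ∧
          x (⟨n - 1, by omega⟩, ⟨n - 1, by omega⟩) = 0))) := by
  have hn₀ : 0 < n := by omega
  exact ⟨fun x _ => Queens.adjMatrix_mulVec_eq_neg_four_smul_iff hn₀ x,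
    exists_congr fun x => and_congr_right fun _ => Queens.adjMatrix_mulVec_eq_neg_four_smul_iff hn₀ x⟩
end

section
/- For every n ≥ 3, the largest real eigenvalue μ₁ of the adjacency matrix of the n-Queens' graph Q(n) satisfies 2(n−1)(5n−1)/(3n) ≤ μ₁, and μ₁ ≤ 4n−5 if n is even, while μ₁ ≤ 4n−4 if n is odd. -/
open Finset Module End Matrix
open scoped InnerProductSpace

theorem LinearMap.IsSymmetric.exists_hasEigenvalue_rayleigh_le {𝕜 E : Type*} [RCLike 𝕜]
    [NormedAddCommGroup E] [InnerProductSpace 𝕜 E] [FiniteDimensional 𝕜 E] {T : E →ₗ[𝕜] E}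
    (hT : T.IsSymmetric) {x : E} (hx : x ≠ 0) :
    ∃ μ : ℝ, HasEigenvalue T μ ∧ RCLike.re ⟪T x, x⟫_𝕜 / ‖x‖ ^ 2 ≤ μ := by
  have : Nontrivial E := ⟨⟨x, 0, hx⟩⟩
  refine ⟨_, hT.hasEigenvalue_iSup_of_finiteDimensional,
    le_ciSup (f := fun y : {y : E // y ≠ 0} ↦ RCLike.re ⟪T y, y⟫_𝕜 / ‖(y : E)‖ ^ 2) ?_ ⟨x, hx⟩⟩
  refine ⟨‖LinearMap.toContinuousLinearMap T‖, ?_⟩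
  rintro _ ⟨y, rfl⟩
  exact (le_abs_self _).trans ((LinearMap.toContinuousLinearMap T).rayleighQuotient_le_norm y)

theorem Matrix.hasEigenvalue_toLin'_iff {R n : Type*} [CommRing R] [Fintype n] [DecidableEq n]
    (A : Matrix n n R) (μ : R) :
    HasEigenvalue (toLin' A) μ ↔ ∃ x, x ≠ 0 ∧ A *ᵥ x = μ • x := by
  simp only [hasEigenvalue_iff, Submodule.ne_bot_iff, mem_eigenspace_iff, toLin'_apply]
  exact exists_congr fun x ↦ and_comm

theorem Matrix.IsHermitian.exists_hasEigenvalue_rayleigh_le {n : Type*} [Fintype n]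
    [DecidableEq n] {A : Matrix n n ℝ} (hA : A.IsHermitian) {x : n → ℝ} (hx : x ≠ 0) :
    ∃ μ, HasEigenvalue (toLin' A) μ ∧ x ⬝ᵥ A *ᵥ x / (x ⬝ᵥ x) ≤ μ := by
  obtain ⟨μ, hμ, hle⟩ := (isSymmetric_toEuclideanLin_iff.mpr hA).exists_hasEigenvalue_rayleigh_le
    (x := WithLp.toLp 2 x) (by simpa using hx)
  refine ⟨μ, ?_, ?_⟩
  · rw [hasEigenvalue_iff_mem_spectrum, spectrum_toLin', ← spectrum_toLpLin 2]
    exact hμ.mem_spectrum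
  · convert hle using 2
    · simp [EuclideanSpace.inner_toLp_toLp]
    · rw [← real_inner_self_eq_norm_sq, EuclideanSpace.inner_toLp_toLp]
      simp

namespace SimpleGraph

variable {V : Type*} [Fintype V] [DecidableEq V] (G : SimpleGraph V) [DecidableRel G.Adj]

theorem exists_le_degree_of_hasEigenvalue {μ : ℝ}
    (hμ : HasEigenvalue (toLin' (G.adjMatrix ℝ)) μ) : ∃ v, μ ≤ G.degree v := by
  obtain ⟨v, hv⟩ := eigenvalue_mem_ball hμ
  have hrow : ∑ w ∈ univ.erase v, ‖G.adjMatrix ℝ v w‖ = G.degree v := by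
    rw [sum_erase _ (by simp)]
    simp [adjMatrix_apply, apply_ite, ← card_neighborFinset_eq_degree, neighborFinset_eq_filter]
  rw [Metric.mem_closedBall, hrow, adjMatrix_apply, if_neg G.irrefl, Real.dist_eq,
    sub_zero] at hv
  exact ⟨v, (le_abs_self μ).trans hv⟩

theorem exists_hasEigenvalue_average_degree_le [Nonempty V] :
    ∃ μ, HasEigenvalue (toLin' (G.adjMatrix ℝ)) μ ∧
      (∑ v, G.degree v : ℝ) / Fintype.card V ≤ μ := by
  obtain ⟨μ, hμ, hle⟩ :=
    (G.isHermitian_adjMatrix ℝ).exists_hasEigenvalue_rayleigh_le (x := 1) one_ne_zero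
  refine ⟨μ, hμ, le_of_eq_of_le ?_ hle⟩
  simp [one_dotProduct, dotProduct_one]

end SimpleGraph

theorem Finset.card_filter_fst_eq {α β : Type*} [Fintype α] [Fintype β] [DecidableEq α] (a : α) :
    #{w : α × β | w.1 = a} = Fintype.card β := by
  rw [← univ_product_univ, filter_product_left (· = a), card_product, filter_eq',
    if_pos (mem_univ a), card_singleton, one_mul, card_univ]

theorem Finset.card_filter_snd_eq {α β : Type*} [Fintype α] [Fintype β] [DecidableEq β] (b : β) :
    #{w : α × β | w.2 = b} = Fintype.card α := by
  rw [← univ_product_univ, filter_product_right (· = b), card_product, filter_eq',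
    if_pos (mem_univ b), card_singleton, mul_one, card_univ]

theorem Fin.card_filter_val_sub_eq (n : ℕ) (d : ℤ) :
    #{w : Fin n × Fin n | (w.1 : ℤ) - w.2 = d} = n - d.natAbs := by
  have hIco : #{w : Fin n × Fin n | (w.1 : ℤ) - w.2 = d}
      = #(Ico (max 0 d) (min (n : ℤ) (n + d))) := by
    refine card_bij (fun w _ ↦ (w.1 : ℤ)) (fun w hw ↦ ?_) (fun w hw w' hw' h ↦ ?_) (fun t ht ↦ ?_)
    · simp only [mem_filter, mem_univ, true_and] at hw
      simp only [mem_Ico]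
      omega
    · simp only [mem_filter, mem_univ, true_and] at hw hw'
      exact Prod.ext (Fin.ext (by omega)) (Fin.ext (by omega))
    · simp only [mem_Ico] at ht
      refine ⟨(⟨t.toNat, by omega⟩, ⟨(t - d).toNat, by omega⟩), ?_, ?_⟩ <;>
        simp only [mem_filter, mem_univ, true_and, Int.ofNat_toNat] <;> omega
  rw [hIco, Int.card_Ico]
  omega

theorem Fin.card_filter_val_add_eq (n : ℕ) (s : ℤ) :
    #{w : Fin n × Fin n | (w.1 : ℤ) + w.2 = s} = n - (s - (n - 1)).natAbs := by
  rw [← card_filter_val_sub_eq]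
  refine card_equiv ((Equiv.refl _).prodCongr Fin.revPerm) fun w ↦ ?_
  simp only [mem_filter, mem_univ, true_and, Equiv.prodCongr_apply, Prod.map, Equiv.refl_apply,
    Fin.revPerm_apply, Fin.val_rev]
  omega

theorem Finset.sum_range_sum_range_abs_sub (n : ℕ) :
    3 * ∑ i ∈ range n, ∑ j ∈ range n, |(i : ℤ) - j| = n ^ 3 - n := by
  induction n with
  | zero => simp
  | succ n ih =>
    have hgauss : 2 * ∑ i ∈ range n, (i : ℤ) = n * (n - 1) := by
      have := congrArg (Nat.cast : ℕ → ℤ) (sum_range_id_mul_two n)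
      rcases n with _ | n
      · simp
      · push_cast at this ⊢
        linarith
    have hrow : ∑ i ∈ range n, |(i : ℤ) - n| = ∑ i ∈ range n, ((n : ℤ) - i) :=
      sum_congr rfl fun i hi ↦ by
        rw [abs_sub_comm, abs_of_nonneg (sub_nonneg.mpr (mod_cast (mem_range.mp hi).le))]
    have hcol : ∑ j ∈ range n, |(n : ℤ) - j| = ∑ i ∈ range n, ((n : ℤ) - i) :=
      sum_congr rfl fun j hj ↦ abs_of_nonneg (sub_nonneg.mpr (mod_cast (mem_range.mp hj).le))
    simp only [sum_range_succ, sum_add_distrib, hrow, hcol, sub_self, abs_zero, add_zero,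
      sum_sub_distrib, sum_const, card_range, nsmul_eq_mul] at ih ⊢
    push_cast
    linear_combination ih - 3 * hgauss

theorem Fin.sum_abs_val_sub (n : ℕ) :
    3 * ∑ v : Fin n × Fin n, |(v.1 : ℤ) - v.2| = n ^ 3 - n := by
  rw [Fintype.sum_prod_type, ← sum_range_sum_range_abs_sub,
    ← Fin.sum_univ_eq_sum_range (fun i ↦ ∑ j ∈ range n, |(i : ℤ) - j|)]
  exact congrArg _ (sum_congr rfl fun i _ ↦ Fin.sum_univ_eq_sum_range (fun j ↦ |(i : ℤ) - j|) n)

theorem queensGraph_degree {n : ℕ} (v : Fin n × Fin n) : ((queensGraph n).degree v : ℤ) =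
    4 * (n - 1) - |(v.1 : ℤ) - v.2| - |(v.1 : ℤ) + v.2 - (n - 1)| := by
  -- `v` lies on all four of its lines, and any other square on at most one of them.
  have hsplit : ∀ w : Fin n × Fin n, (if (queensGraph n).Adj v w then 1 else 0)
      + (if w = v then 4 else 0) = (if w.1 = v.1 then 1 else 0) + (if w.2 = v.2 then 1 else 0)
      + (if (w.1 : ℤ) - w.2 = v.1 - v.2 then 1 else 0)
      + (if (w.1 : ℤ) + w.2 = v.1 + v.2 then 1 else 0) := by
    intro w
    simp only [queensGraph, ne_eq, Prod.ext_iff, Fin.ext_iff]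
    split_ifs <;> omega
  have hsum := sum_congr rfl fun w (_ : w ∈ univ) ↦ hsplit w
  simp only [sum_add_distrib, sum_boole, sum_ite_eq', mem_univ, if_true, Nat.cast_id,
    card_filter_fst_eq, card_filter_snd_eq, Fintype.card_fin, Fin.card_filter_val_sub_eq,
    Fin.card_filter_val_add_eq, ← SimpleGraph.neighborFinset_eq_filter,
    SimpleGraph.card_neighborFinset_eq_degree] at hsum
  have := v.1.isLt
  have := v.2.isLt
  rw [Int.abs_eq_natAbs, Int.abs_eq_natAbs]
  omega

theorem queensGraph_degree_le {n : ℕ} (v : Fin n × Fin n) :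
    ((queensGraph n).degree v : ℤ) ≤ 4 * n - 4 := by
  rw [queensGraph_degree]
  linarith [abs_nonneg ((v.1 : ℤ) - v.2), abs_nonneg ((v.1 : ℤ) + v.2 - (n - 1))]

theorem queensGraph_degree_le_of_even {n : ℕ} (hn : Even n) (v : Fin n × Fin n) :
    ((queensGraph n).degree v : ℤ) ≤ 4 * n - 5 := by
  obtain ⟨k, rfl⟩ := hn
  rw [queensGraph_degree, Int.abs_eq_natAbs, Int.abs_eq_natAbs]
  omega

theorem queensGraph_sum_degree (n : ℕ) :
    3 * ∑ v, ((queensGraph n).degree v : ℤ) = 2 * n * (n - 1) * (5 * n - 1) := by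
  have hreflect : ∑ v : Fin n × Fin n, |(v.1 : ℤ) + v.2 - (n - 1)|
      = ∑ v : Fin n × Fin n, |(v.1 : ℤ) - v.2| := by
    refine Fintype.sum_equiv ((Equiv.refl _).prodCongr Fin.revPerm) _ _ fun v ↦ ?_
    simp only [Equiv.prodCongr_apply, Prod.map, Equiv.refl_apply, Fin.revPerm_apply, Fin.val_rev]
    have := v.2.isLt
    congr 1
    omega
  simp only [queensGraph_degree, sum_sub_distrib, hreflect, sum_const, card_univ,
    Fintype.card_prod, Fintype.card_fin, nsmul_eq_mul]
  push_cast
  linear_combination -2 * Fin.sum_abs_val_sub n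

theorem queens_largest_eigenvalue_bounds_general (n : ℕ) (μ₁ : ℝ)
    (h₁ : ∃ x : Fin n × Fin n → ℝ, x ≠ 0 ∧
      ((queensGraph n).adjMatrix ℝ).mulVec x = μ₁ • x)
    (hmax : ∀ μ : ℝ, (∃ x : Fin n × Fin n → ℝ, x ≠ 0 ∧
      ((queensGraph n).adjMatrix ℝ).mulVec x = μ • x) → μ ≤ μ₁) :
    2 * ((n : ℝ) - 1) * (5 * (n : ℝ) - 1) / (3 * (n : ℝ)) ≤ μ₁ ∧
      (Even n → μ₁ ≤ 4 * (n : ℝ) - 5) ∧ (Odd n → μ₁ ≤ 4 * (n : ℝ) - 4) := by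
  obtain ⟨w, hw⟩ := (queensGraph n).exists_le_degree_of_hasEigenvalue
    ((hasEigenvalue_toLin'_iff _ μ₁).mpr h₁)
  have : Nonempty (Fin n × Fin n) := ⟨w⟩
  obtain ⟨μ, hμ, hμ_ge⟩ := (queensGraph n).exists_hasEigenvalue_average_degree_le
  have hn : (n : ℝ) ≠ 0 := by exact_mod_cast (Fin.pos w.1).ne'
  have hsum : 3 * ∑ v, ((queensGraph n).degree v : ℝ) = 2 * n * (n - 1) * (5 * n - 1) := by
    exact_mod_cast queensGraph_sum_degree n
  refine ⟨?_, fun he ↦ hw.trans (mod_cast queensGraph_degree_le_of_even he w),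
    fun _ ↦ hw.trans (mod_cast queensGraph_degree_le w)⟩
  calc 2 * ((n : ℝ) - 1) * (5 * n - 1) / (3 * n)
      = (∑ v, ((queensGraph n).degree v : ℝ)) / Fintype.card (Fin n × Fin n) := by
        rw [Fintype.card_prod, Fintype.card_fin, Nat.cast_mul,
          div_eq_div_iff (mul_ne_zero three_ne_zero hn) (mul_ne_zero hn hn)]
        linear_combination -(n : ℝ) * hsum
    _ ≤ μ := hμ_ge
    _ ≤ μ₁ := hmax μ ((hasEigenvalue_toLin'_iff _ μ).mp hμ)

/-- for `n ≥ 3`, the largest real eigenvalue `μ₁` of the adjacency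
matrix of `Q(n)` satisfies `2(n-1)(5n-1)/(3n) ≤ μ₁`, together with `μ₁ ≤ 4n-5`
for even `n` and `μ₁ ≤ 4n-4` for odd `n`. -/
theorem queens_largest_eigenvalue_bounds (n : ℕ) (hn : 3 ≤ n) (μ₁ : ℝ)
    (h₁ : ∃ x : Fin n × Fin n → ℝ, x ≠ 0 ∧
      ((queensGraph n).adjMatrix ℝ).mulVec x = μ₁ • x)
    (hmax : ∀ μ : ℝ, (∃ x : Fin n × Fin n → ℝ, x ≠ 0 ∧
      ((queensGraph n).adjMatrix ℝ).mulVec x = μ • x) → μ ≤ μ₁) :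
    2 * ((n : ℝ) - 1) * (5 * (n : ℝ) - 1) / (3 * (n : ℝ)) ≤ μ₁ ∧
      (Even n → μ₁ ≤ 4 * (n : ℝ) - 5) ∧ (Odd n → μ₁ ≤ 4 * (n : ℝ) - 4) :=
  queens_largest_eigenvalue_bounds_general n μ₁ h₁ hmax
end

section
/- For every n ≥ 3, the n-Queens' graph Q(n) admits an equitable partition of its vertex set with exactly (⌈n/2⌉ + 1)·⌈n/2⌉/2 cells; that is, there exists a partition V(Q(n)) = V₁ ∪ … ∪ V_k with k = (⌈n/2⌉ + 1)·⌈n/2⌉/2 pairwise disjoint nonempty cells such that for all indices i, j and all vertices u, v ∈ V_i, the number of neighbors of u in V_j equals the number of neighbors of v in V_j. -/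
/-!
The reflections of the board in its midlines and its diagonal are automorphisms of `Q(n)`, and
the orbits of any group of automorphisms form an equitable partition. The orbit of a square
`(i, j)` is determined by the unordered pair of the distances of `i` and `j` to the nearest edge,
and these distances range over `{0, …, ⌈n/2⌉ - 1}`: there are `(⌈n/2⌉ + 1) ⌈n/2⌉ / 2` orbits.
-/

open Finset

namespace SimpleGraph

variable {V ι κ : Type*} [Fintype V] [DecidableEq V]

def IsEquitablePartition (G : SimpleGraph V) [DecidableRel G.Adj] (C : ι → Finset V) : Prop :=
  (∀ i, (C i).Nonempty) ∧
  (∀ i j, i ≠ j → Disjoint (C i) (C j)) ∧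
  (∀ v, ∃ i, v ∈ C i) ∧
  (∀ i j, ∀ u ∈ C i, ∀ v ∈ C i,
    #(G.neighborFinset u ∩ C j) = #(G.neighborFinset v ∩ C j))

variable {G : SimpleGraph V} [DecidableRel G.Adj]

theorem IsEquitablePartition.comp_equiv {C : ι → Finset V} (hC : G.IsEquitablePartition C)
    (e : κ ≃ ι) : G.IsEquitablePartition (C ∘ e) := by
  obtain ⟨hne, hdisj, hcover, hequi⟩ := hC
  refine ⟨fun i => hne (e i), fun i j hij => hdisj _ _ (e.injective.ne hij), fun v => ?_,
    fun i j => hequi (e i) (e j)⟩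
  obtain ⟨i, hi⟩ := hcover v
  exact ⟨e.symm i, by simpa using hi⟩

theorem Iso.card_neighborFinset_inter (φ : G ≃g G) {s : Finset V}
    (hs : ∀ w, φ w ∈ s ↔ w ∈ s) (u : V) :
    #(G.neighborFinset (φ u) ∩ s) = #(G.neighborFinset u ∩ s) := by
  rw [← card_image_of_injective (G.neighborFinset u ∩ s) φ.injective]
  congr 1
  ext w
  obtain ⟨w, rfl⟩ := φ.surjective w
  simp only [mem_inter, mem_image, mem_neighborFinset, φ.injective.eq_iff, exists_eq_right,
    φ.map_adj_iff, hs]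

theorem isEquitablePartition_fibers [DecidableEq ι] {f : V → ι} (hf : Function.Surjective f)
    (hsym : ∀ u v, f u = f v → ∃ φ : G ≃g G, (∀ w, f (φ w) = f w) ∧ φ u = v) :
    G.IsEquitablePartition fun i => ({v | f v = i} : Finset V) := by
  refine ⟨fun i => ?_, fun i j hij => ?_, fun v => ⟨f v, by simp⟩, fun i j u hu v hv => ?_⟩
  · obtain ⟨v, rfl⟩ := hf i
    exact ⟨v, by simp⟩
  · rw [disjoint_filter]
    rintro v - rfl
    exact hij
  · simp only [mem_filter, mem_univ, true_and] at hu hv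
    obtain ⟨φ, hφ, rfl⟩ := hsym u v (hu.trans hv.symm)
    refine (φ.card_neighborFinset_inter (fun w => ?_) u).symm
    simp only [mem_filter, mem_univ, true_and, hφ]

end SimpleGraph

namespace queensGraph

variable {n : ℕ}

def edgeDist (i : Fin n) : ℕ := min i.val i.rev.val

theorem edgeDist_rev (i : Fin n) : edgeDist i.rev = edgeDist i := by
  simp only [edgeDist, Fin.rev_rev, min_comm]

theorem edgeDist_eq_edgeDist_iff {i j : Fin n} :
    edgeDist i = edgeDist j ↔ i = j ∨ i = j.rev := by
  have := i.isLt
  simp only [edgeDist, Fin.ext_iff, Fin.val_rev]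
  omega

theorem edgeDist_lt (i : Fin n) : edgeDist i < (n + 1) / 2 := by
  have := i.isLt
  simp only [edgeDist, Fin.val_rev]
  omega

theorem edgeDist_mk_of_lt {a : ℕ} (ha : a < (n + 1) / 2) :
    edgeDist (⟨a, by omega⟩ : Fin n) = a := by
  simp only [edgeDist, Fin.val_rev]
  omega

def squareClass (p : Fin n × Fin n) : Sym2 ℕ := s(edgeDist p.1, edgeDist p.2)

theorem squareClass_mem_sym2 (p : Fin n × Fin n) :
    squareClass p ∈ (range ((n + 1) / 2)).sym2 := by
  simp [squareClass, edgeDist_lt]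

theorem exists_squareClass_eq {z : Sym2 ℕ} (hz : z ∈ (range ((n + 1) / 2)).sym2) :
    ∃ p : Fin n × Fin n, squareClass p = z := by
  induction z using Sym2.ind with
  | h a b =>
    simp only [mk_mem_sym2_iff, mem_range] at hz
    refine ⟨(⟨a, by omega⟩, ⟨b, by omega⟩), ?_⟩
    simp only [squareClass, edgeDist_mk_of_lt hz.1, edgeDist_mk_of_lt hz.2]

def reflectRows : queensGraph n ≃g queensGraph n where
  toEquiv := Equiv.prodCongr Fin.revPerm (Equiv.refl _)
  map_rel_iff' {u v} := by
    have := u.1.isLt; have := v.1.isLt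
    simp only [queensGraph, Equiv.prodCongr_apply, Prod.map, Fin.revPerm_apply, Equiv.refl_apply,
      ne_eq, Prod.ext_iff, Fin.ext_iff, Fin.val_rev]
    omega

def reflectCols : queensGraph n ≃g queensGraph n where
  toEquiv := Equiv.prodCongr (Equiv.refl _) Fin.revPerm
  map_rel_iff' {u v} := by
    have := u.2.isLt; have := v.2.isLt
    simp only [queensGraph, Equiv.prodCongr_apply, Prod.map, Fin.revPerm_apply, Equiv.refl_apply,
      ne_eq, Prod.ext_iff, Fin.ext_iff, Fin.val_rev]
    omega

def transpose : queensGraph n ≃g queensGraph n where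
  toEquiv := Equiv.prodComm _ _
  map_rel_iff' {u v} := by
    simp only [queensGraph, Equiv.prodComm_apply, Prod.fst_swap, Prod.snd_swap, ne_eq,
      Prod.ext_iff, Fin.ext_iff]
    omega

def squareClassAut (n : ℕ) : Subgroup (queensGraph n ≃g queensGraph n) where
  carrier := {φ | ∀ p, squareClass (φ p) = squareClass p}
  one_mem' _ := rfl
  mul_mem' hφ hψ p := (hφ _).trans (hψ p)
  inv_mem' {φ} hφ p := by rw [← hφ (φ⁻¹ p), RelIso.apply_inv_self]

theorem reflectRows_mem : reflectRows ∈ squareClassAut n := fun p => by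
  simp [reflectRows, squareClass, edgeDist_rev]

theorem reflectCols_mem : reflectCols ∈ squareClassAut n := fun p => by
  simp [reflectCols, squareClass, edgeDist_rev]

theorem transpose_mem : transpose ∈ squareClassAut n := fun p => by
  simp [transpose, squareClass, Sym2.eq_swap]

theorem exists_mem_squareClassAut_apply_eq_of_edgeDist_eq {u v : Fin n × Fin n}
    (h₁ : edgeDist u.1 = edgeDist v.1) (h₂ : edgeDist u.2 = edgeDist v.2) :
    ∃ φ ∈ squareClassAut n, φ u = v := by
  obtain ⟨φ, hφ, hφu⟩ : ∃ φ ∈ squareClassAut n, φ u = (v.1, u.2) := by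
    rcases edgeDist_eq_edgeDist_iff.1 h₁ with h | h
    · exact ⟨1, one_mem _, by simp [Prod.ext_iff, h]⟩
    · exact ⟨reflectRows, reflectRows_mem, by simp [reflectRows, Prod.ext_iff, h]⟩
  obtain ⟨ψ, hψ, hψu⟩ : ∃ ψ ∈ squareClassAut n, ψ (v.1, u.2) = v := by
    rcases edgeDist_eq_edgeDist_iff.1 h₂ with h | h
    · exact ⟨1, one_mem _, by simp [h]⟩
    · exact ⟨reflectCols, reflectCols_mem, by simp [reflectCols, h]⟩
  exact ⟨ψ * φ, mul_mem hψ hφ, by rw [RelIso.mul_apply, hφu, hψu]⟩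

theorem exists_mem_squareClassAut_apply_eq {u v : Fin n × Fin n}
    (h : squareClass u = squareClass v) : ∃ φ ∈ squareClassAut n, φ u = v := by
  rcases Sym2.eq_iff.1 h with ⟨h₁, h₂⟩ | ⟨h₁, h₂⟩
  · exact exists_mem_squareClassAut_apply_eq_of_edgeDist_eq h₁ h₂
  · obtain ⟨φ, hφ, hφu⟩ :=
      exists_mem_squareClassAut_apply_eq_of_edgeDist_eq (u := transpose u) h₂ h₁
    exact ⟨φ * transpose, mul_mem hφ transpose_mem, hφu⟩

theorem isEquitablePartition_squareClass :
    (queensGraph n).IsEquitablePartition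
      fun z : (range ((n + 1) / 2)).sym2 => ({p | squareClass p = z} : Finset _) := by
  have key := SimpleGraph.isEquitablePartition_fibers (G := queensGraph n)
    (f := fun p => (⟨squareClass p, squareClass_mem_sym2 p⟩ : (range ((n + 1) / 2)).sym2))
    (fun z => ?_) (fun u v h => ?_)
  · simpa only [Subtype.ext_iff] using key
  · obtain ⟨p, hp⟩ := exists_squareClass_eq z.2
    exact ⟨p, Subtype.ext hp⟩
  · obtain ⟨φ, hφ, hφu⟩ := exists_mem_squareClassAut_apply_eq (congrArg Subtype.val h)
    exact ⟨φ, fun w => Subtype.ext (hφ w), hφu⟩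

end queensGraph

theorem queens_equitable_partition_general (n : ℕ) :
    ∃ C : Fin (((n + 1) / 2 + 1) * ((n + 1) / 2) / 2) → Finset (Fin n × Fin n),
      (∀ i, (C i).Nonempty) ∧
      (∀ i j, i ≠ j → Disjoint (C i) (C j)) ∧
      (∀ v, ∃ i, v ∈ C i) ∧
      (∀ i j, ∀ u ∈ C i, ∀ v ∈ C i,
        ((queensGraph n).neighborFinset u ∩ C j).card =
          ((queensGraph n).neighborFinset v ∩ C j).card) := by
  have hcard : #(range ((n + 1) / 2)).sym2 = ((n + 1) / 2 + 1) * ((n + 1) / 2) / 2 := by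
    rw [card_sym2, card_range, Nat.choose_two_right, Nat.add_sub_cancel]
  exact ⟨_,
    queensGraph.isEquitablePartition_squareClass.comp_equiv (equivFinOfCardEq hcard).symm⟩

/-- for `n ≥ 3`, `Q(n)` has an equitable partition of its vertex
set with exactly `(⌈n/2⌉ + 1) * ⌈n/2⌉ / 2` cells (note `⌈n/2⌉ = (n + 1) / 2` in
natural number arithmetic): the cells are nonempty, pairwise disjoint, cover all
vertices, and any two vertices of a cell have the same number of neighbours in
each cell. -/
theorem queens_equitable_partition (n : ℕ) (hn : 3 ≤ n) :
    ∃ C : Fin (((n + 1) / 2 + 1) * ((n + 1) / 2) / 2) → Finset (Fin n × Fin n),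
      (∀ i, (C i).Nonempty) ∧
      (∀ i j, i ≠ j → Disjoint (C i) (C j)) ∧
      (∀ v, ∃ i, v ∈ C i) ∧
      (∀ i j, ∀ u ∈ C i, ∀ v ∈ C i,
        ((queensGraph n).neighborFinset u ∩ C j).card =
          ((queensGraph n).neighborFinset v ∩ C j).card) :=
  queens_equitable_partition_general n
end
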